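/- arXiv:2104.12200 — 8 statements merged into one kernel-verified Lean document; each statement's English description precedes it below -/
import Mathlib

section
/- Let d and a_0, …, a_{n+1} be positive integers with d ≥ a_i for every i, and let r be a positive integer with r ≤ n+2 such that: (1) a_i divides d for every i ≥ r, and (2) d − a_{r−1} ≡ 0 (mod a_{r−2}), d − a_{r−2} ≡ 0 (mod a_{r−3}), …, d − a_1 ≡ 0 (mod a_0), and d − a_0 ≡ 0 (mod a_{r−1}). Then for every nonempty subset I of {0, …, n+1}, either d is an ℕ-linear combination of the numbers a_i with i ∈ I, or there are at least |I| distinct indices j ∉ I such that d − a_j is an ℕ-linear combination of the numbers a_i with i ∈ I. -/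
/-- Iano-Fletcher-style combinatorial conclusion from a cycle of congruences.

Let `d` and `a 0, …, a (n+1)` be positive integers with `d ≥ a i` for every `i ≤ n+1`,
and let `r` be a positive integer with `r ≤ n+2` such that all weights `a i` with
`i ≥ r` divide `d`, and the cycle of congruences
`a (i-1) ∣ d - a i` for `1 ≤ i ≤ r-1` and `a (r-1) ∣ d - a 0` holds.
Then for every nonempty subset `I` of `{0, …, n+1}`, either `d` is an ℕ-linear
combination of the `a i` with `i ∈ I`, or there are at least `|I|` distinct indices
`j ∉ I` (with `j ≤ n+1`) such that `d - a j` is an ℕ-linear combination of the `a i`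
with `i ∈ I`. -/
theorem cycle_quasismooth_criterion (n : ℕ) (d : ℕ) (a : ℕ → ℕ) (r : ℕ)
    (hd : 0 < d)
    (hapos : ∀ i ≤ n + 1, 0 < a i)
    (hda : ∀ i ≤ n + 1, a i ≤ d)
    (hr1 : 1 ≤ r) (hr2 : r ≤ n + 2)
    (hdiv : ∀ i, r ≤ i → i ≤ n + 1 → a i ∣ d)
    (hcycle : ∀ i, 1 ≤ i → i ≤ r - 1 → a (i - 1) ∣ (d - a i))
    (hcycle0 : a (r - 1) ∣ (d - a 0)) :
    ∀ I ⊆ Finset.range (n + 2), I.Nonempty →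
      (∃ m : ℕ → ℕ, d = ∑ i ∈ I, m i * a i) ∨
      (∃ J ⊆ Finset.range (n + 2), Disjoint I J ∧ I.card ≤ J.card ∧
        ∀ j ∈ J, ∃ m : ℕ → ℕ, d - a j = ∑ i ∈ I, m i * a i) := by
  intro I hI hne
  -- single-index combination helper
  have hsum : ∀ (j : ℕ) (c : ℕ), j ∈ I →
      (∑ i ∈ I, (fun k => if k = j then c else 0) i * a i) = c * a j := by
    intro j c hj
    simp [ite_mul, Finset.sum_ite_eq', hj]
  by_cases hbig : ∃ i ∈ I, r ≤ i
  · obtain ⟨i0, hi0, hri0⟩ := hbig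
    have hi0n : i0 ≤ n + 1 := by have := hI hi0; simp [Finset.mem_range] at this; omega
    left
    refine ⟨fun k => if k = i0 then d / a i0 else 0, ?_⟩
    rw [hsum i0 (d / a i0) hi0, Nat.div_mul_cancel (hdiv i0 hri0 hi0n)]
  · push_neg at hbig
    -- all indices of I are < r
    set σ : ℕ → ℕ := fun j => (j + 1) % r with hσ
    have hσlt : ∀ j, σ j < r := fun j => Nat.mod_lt _ (by omega)
    have hσval : ∀ j < r, (j + 1 = r ∧ σ j = 0) ∨ (j + 1 < r ∧ σ j = j + 1) := by
      intro j hj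
      rcases Nat.lt_or_ge (j+1) r with h | h
      · right; exact ⟨h, Nat.mod_eq_of_lt h⟩
      · left; have : j + 1 = r := by omega
        exact ⟨this, by simp [hσ, this]⟩
    have hdivσ : ∀ j < r, a j ∣ d - a (σ j) := by
      intro j hj
      rcases hσval j hj with ⟨h1, h2⟩ | ⟨h1, h2⟩
      · rw [h2]; have : j = r - 1 := by omega
        rw [this]; exact hcycle0
      · rw [h2]
        have := hcycle (j+1) (by omega) (by omega)
        simpa using this
    have hσle : ∀ j, a (σ j) ≤ d := fun j => hda _ (by have := hσlt j; omega)
    have key : ∀ j < r, d - a (σ j) = (d - a (σ j)) / a j * a j :=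
      fun j hj => (Nat.div_mul_cancel (hdivσ j hj)).symm
    by_cases hin : ∃ j ∈ I, σ j ∈ I
    · obtain ⟨j, hj, hσj⟩ := hin
      have hjr : j < r := hbig j hj
      left
      refine ⟨fun k => (if k = j then (d - a (σ j)) / a j else 0) +
        (if k = σ j then 1 else 0), ?_⟩
      have split : ∀ k ∈ I, ((if k = j then (d - a (σ j)) / a j else 0) +
          (if k = σ j then 1 else 0)) * a k
          = (if k = j then (d - a (σ j)) / a j else 0) * a k +
            (if k = σ j then 1 else 0) * a k := fun k _ => add_mul _ _ _
      rw [Finset.sum_congr rfl split, Finset.sum_add_distrib,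
        hsum j _ hj, hsum (σ j) 1 hσj, ← key j hjr, one_mul]
      have := hσle j
      omega
    · push_neg at hin
      right
      refine ⟨I.image σ, ?_, ?_, ?_, ?_⟩
      · intro x hx
        simp only [Finset.mem_image] at hx
        obtain ⟨j, _, rfl⟩ := hx
        simp only [Finset.mem_range]
        have := hσlt j; omega
      · rw [Finset.disjoint_right]
        intro x hx
        simp only [Finset.mem_image] at hx
        obtain ⟨j, hj, rfl⟩ := hx
        exact hin j hj
      · rw [Finset.card_image_of_injOn]
        intro x hx y hy hxy
        have hxr : x < r := hbig x hx
        have hyr : y < r := hbig y hy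
        rcases hσval x hxr with ⟨h1, h2⟩ | ⟨h1, h2⟩ <;>
          rcases hσval y hyr with ⟨h3, h4⟩ | ⟨h3, h4⟩ <;>
          simp only [h2, h4] at hxy <;> omega
      · intro j' hj'
        simp only [Finset.mem_image] at hj'
        obtain ⟨j, hj, rfl⟩ := hj'
        have hjr : j < r := hbig j hj
        exact ⟨fun k => if k = j then (d - a (σ j)) / a j else 0,
          by rw [hsum j _ hj]; exact key j hjr⟩
end

section
/- For every natural number i, the polynomial f_i satisfies f_i = 1 + y·(f_0⋯f_{i−1} − f_0⋯f_{i−2} + ⋯ + (−1)^i) in ℤ[y]; that is, f_i = 1 + y·Σ_{j=0}^{i} (−1)^{i−j} ∏_{k=0}^{j−1} f_k, where the empty product is 1. -/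
open Polynomial

/-- The sequence `f` in `ℤ[y]`: `f 0 = y+1`, `f 1 = y²+1`,
`f i = f (i-1) * f (i-2) + (f (i-1) - 1) * (f (i-1) - 2)` for `i ≥ 2`. -/
noncomputable def fP : ℕ → Polynomial ℤ
  | 0 => X + 1
  | 1 => X ^ 2 + 1
  | (i + 2) => fP (i + 1) * fP i + (fP (i + 1) - 1) * (fP (i + 1) - 2)

/-- The sequence `e` in `ℤ[y]`: `e i = y · f 0 ⋯ f (i-1)`. -/
noncomputable def eP (i : ℕ) : Polynomial ℤ := X * ∏ k ∈ Finset.range i, fP k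

/-- The sequence `b` in `ℤ[y]`: `b 0 = 1` and `b i = (-1)^i + f (i-1) * b (i-1)` for `i ≥ 1`. -/
noncomputable def bP : ℕ → Polynomial ℤ
  | 0 => 1
  | (i + 1) => (-1) ^ (i + 1) + fP i * bP i

/-- The sequence `z` in `ℤ[y]`: `z 0 = y - 1`, `z 1 = y² - y + 1`,
`z i = e (i-1) * z (i-1) + z (i-2)` for `i ≥ 2`. -/
noncomputable def zP : ℕ → Polynomial ℤ
  | 0 => X - 1
  | 1 => X ^ 2 - X + 1
  | (i + 2) => eP (i + 1) * zP (i + 1) + zP i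

/-- The sequence `d` in `ℤ[y]`: `d i = e i + b i * (f i - 1)`. -/
noncomputable def dP (i : ℕ) : Polynomial ℤ := eP i + bP i * (fP i - 1)

lemma fP_key (i : ℕ) :
    fP (i + 1) + fP i = 2 + X * ∏ k ∈ Finset.range (i + 1), fP k := by
  induction i with
  | zero => simp [fP]; ring
  | succ n ih =>
    have h : fP (n + 1) + fP n - 2 = X * ∏ k ∈ Finset.range (n + 1), fP k := by
      rw [ih]; ring
    show fP (n + 1) * fP n + (fP (n + 1) - 1) * (fP (n + 1) - 2) + fP (n + 1) = _
    rw [Finset.prod_range_succ]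
    have : fP (n + 1) * fP n + (fP (n + 1) - 1) * (fP (n + 1) - 2) + fP (n + 1)
        = fP (n + 1) * (fP (n + 1) + fP n - 2) + 2 := by ring
    rw [this, h]; ring

/-- Closed form for `f i`:
`f i = 1 + y·(f 0 ⋯ f (i-1) − f 0 ⋯ f (i-2) + ⋯ + (−1)^i)`. -/
theorem fP_closed_form (i : ℕ) :
    fP i = 1 + X * ∑ j ∈ Finset.range (i + 1),
      (-1) ^ (i - j) * ∏ k ∈ Finset.range j, fP k := by
  induction i with
  | zero => simp [fP]; ring
  | succ n ih =>
    have h2 : ∑ j ∈ Finset.range (n + 1), ((-1 : Polynomial ℤ)) ^ (n + 1 - j) *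
        ∏ k ∈ Finset.range j, fP k
        = ∑ j ∈ Finset.range (n + 1), -((-1) ^ (n - j) * ∏ k ∈ Finset.range j, fP k) := by
      apply Finset.sum_congr rfl
      intro j hj
      have hj' : j ≤ n := Nat.lt_succ_iff.mp (Finset.mem_range.mp hj)
      have : n + 1 - j = (n - j) + 1 := by omega
      rw [this, pow_succ]; ring
    rw [Finset.sum_range_succ, Nat.sub_self, pow_zero, one_mul, h2, Finset.sum_neg_distrib]
    have := fP_key n
    have hfn : fP (n + 1) = 2 + X * ∏ k ∈ Finset.range (n + 1), fP k - fP n := by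
      linear_combination this
    rw [hfn, ih]; ring
end

section
/- For every integer i ≥ 1, the polynomials e_i and f_i satisfy the two identities e_i = f_i + f_{i−1} − 2 and e_i = f_{i−1}·e_{i−1} in ℤ[y]. -/
open Polynomial

lemma eP_succ (i : ℕ) : eP (i + 1) = fP i * eP i := by
  simp [eP, Finset.prod_range_succ]; ring

lemma eP_eq (i : ℕ) : eP (i + 1) = fP (i + 1) + fP i - 2 := by
  induction i with
  | zero => simp [eP, fP]; ring
  | succ n ih =>
      rw [eP_succ (n + 1), ih]
      show _ = fP (n + 2) + fP (n + 1) - 2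
      rw [show fP (n + 2) = fP (n + 1) * fP n + (fP (n + 1) - 1) * (fP (n + 1) - 2) from rfl]
      ring

/-- For `i ≥ 1`: `e i = f i + f (i-1) − 2` and `e i = f (i-1) * e (i-1)`. -/
theorem eP_identities (i : ℕ) (hi : 1 ≤ i) :
    eP i = fP i + fP (i - 1) - 2 ∧ eP i = fP (i - 1) * eP (i - 1) := by
  obtain ⟨j, rfl⟩ : ∃ j, i = j + 1 := ⟨i - 1, (Nat.succ_pred_eq_of_pos hi).symm⟩
  simp only [Nat.add_sub_cancel]
  exact ⟨eP_eq j, eP_succ j⟩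
end

section
/- For every natural number i, the identity f_0⋯f_{i−1}·z_i = (−1)^{i+1} + b_i(f_i − 1) holds in ℤ[y], where the empty product (for i = 0) is 1. -/
open Polynomial

/-- The identity `f 0 ⋯ f (i-1) · z i = (−1)^(i+1) + b i * (f i − 1)` in `ℤ[y]`. -/
theorem zP_relation (i : ℕ) :
    (∏ k ∈ Finset.range i, fP k) * zP i = (-1) ^ (i + 1) + bP i * (fP i - 1) := by
  induction i using Nat.twoStepInduction with
  | zero =>
    rw [Finset.range_zero, Finset.prod_empty, show zP 0 = X - 1 from rfl,
      show bP 0 = 1 from rfl, show fP 0 = X + 1 from rfl]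
    ring
  | one =>
    rw [Finset.prod_range_one, show zP 1 = X ^ 2 - X + 1 from rfl,
      show bP 1 = (-1) ^ 1 + fP 0 * bP 0 from rfl, show bP 0 = 1 from rfl,
      show fP 0 = X + 1 from rfl, show fP 1 = X ^ 2 + 1 from rfl]
    ring
  | more n ih1 ih2 =>
    have hz : zP (n + 2) = eP (n + 1) * zP (n + 1) + zP n := rfl
    have hb2 : bP (n + 2) = (-1) ^ (n + 2) + fP (n + 1) * bP (n + 1) := rfl
    have hb1 : bP (n + 1) = (-1) ^ (n + 1) + fP n * bP n := rfl
    have hf : fP (n + 2) = fP (n + 1) * fP n + (fP (n + 1) - 1) * (fP (n + 1) - 2) := rfl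
    have hp2 : (∏ k ∈ Finset.range (n + 2), fP k)
        = (∏ k ∈ Finset.range (n + 1), fP k) * fP (n + 1) := Finset.prod_range_succ _ _
    have hp1 : (∏ k ∈ Finset.range (n + 1), fP k)
        = (∏ k ∈ Finset.range n, fP k) * fP n := Finset.prod_range_succ _ _
    have hs3 : ((-1 : Polynomial ℤ)) ^ (n + 3) = (-1) ^ (n + 1) := by
      rw [show n + 3 = (n + 1) + 2 from rfl, pow_add]; ring
    have hs2 : ((-1 : Polynomial ℤ)) ^ (n + 2) = -((-1) ^ (n + 1)) := by
      rw [pow_succ]; ring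
    rw [hz, hp2, hb2, hf, hb1, eP_eq, hs3, hs2]
    calc (∏ k ∈ Finset.range (n + 1), fP k) * fP (n + 1)
        * ((fP (n + 1) + fP n - 2) * zP (n + 1) + zP n)
        = fP (n + 1) * (fP (n + 1) + fP n - 2)
            * ((∏ k ∈ Finset.range (n + 1), fP k) * zP (n + 1))
          + fP (n + 1) * fP n * ((∏ k ∈ Finset.range n, fP k) * zP n) := by
          rw [hp1]; ring
      _ = fP (n + 1) * (fP (n + 1) + fP n - 2)
            * ((-1) ^ (n + 1 + 1) + bP (n + 1) * (fP (n + 1) - 1))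
          + fP (n + 1) * fP n * ((-1) ^ (n + 1) + bP n * (fP n - 1)) := by
          rw [ih2, ih1]
      _ = (-1) ^ (n + 1) + (-(-1) ^ (n + 1) + fP (n + 1) * bP (n + 1))
          * (fP (n + 1) * fP n + (fP (n + 1) - 1) * (fP (n + 1) - 2) - 1) := by
          rw [hb1, show n + 1 + 1 = n + 2 from rfl, hs2]; ring
end

section
/- Let r be an odd integer at least 3, let n be an integer with n ≥ r − 1, and let y be an integer with y ≥ 2. Let a_0, …, a_{r−1} be the integers obtained by evaluating at y the polynomials a_{r−1} = b_{r−1}, a_0 = d_{r−1} − (z_{r−1} + y)a_{r−1}, and a_{i+1} = d_{r−1} − f_i·a_i for 0 ≤ i ≤ r − 3, and let x = 1 + a_0 + ⋯ + a_{r−1}. Then b_{r−1}(y) ≥ y^{2^{r−1}−1}, a_i > y^{2^r − 2^i − 1} for each 0 ≤ i ≤ r − 1, x > y^{2^r − 2}, and consequently, as rational numbers, 1/(y^{n−r}·x^{n−r+1}·a_0⋯a_{r−1}) < 1/y^{(2^r−1)n − 1}. -/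
open Polynomial

/-- The weight polynomials: `aAux r 0 = d (r-1) − (z (r-1) + y)·b (r-1)` and
`aAux r (i+1) = d (r-1) − f i · aAux r i`. -/
noncomputable def aAux (r : ℕ) : ℕ → Polynomial ℤ
  | 0 => dP (r - 1) - (zP (r - 1) + X) * bP (r - 1)
  | (i + 1) => dP (r - 1) - fP i * aAux r i

/-- The weight polynomials `a i` (for `0 ≤ i ≤ r-1`): `a (r-1) = b (r-1)`,
`a 0 = d (r-1) − (z (r-1) + y)·a (r-1)`, and `a (i+1) = d (r-1) − f i · a i`
for `0 ≤ i ≤ r-3`. -/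
noncomputable def aP (r i : ℕ) : Polynomial ℤ :=
  if i = r - 1 then bP (r - 1) else aAux r i

namespace VolEst

noncomputable def Fv (y : ℤ) (i : ℕ) : ℤ := (fP i).eval y
noncomputable def Ev (y : ℤ) (i : ℕ) : ℤ := (eP i).eval y
noncomputable def Bv (y : ℤ) (i : ℕ) : ℤ := (bP i).eval y
noncomputable def Zv (y : ℤ) (i : ℕ) : ℤ := (zP i).eval y
noncomputable def Dv (y : ℤ) (i : ℕ) : ℤ := (dP i).eval y
noncomputable def Av (y : ℤ) (r i : ℕ) : ℤ := (aAux r i).eval y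

variable (y : ℤ)

lemma Fv0 : Fv y 0 = y + 1 := by simp [Fv, fP]
lemma Fv1 : Fv y 1 = y^2 + 1 := by simp [Fv, fP]
lemma Fv2 (i : ℕ) : Fv y (i+2) = Fv y (i+1) * Fv y i + (Fv y (i+1) - 1) * (Fv y (i+1) - 2) := by
  simp [Fv, fP]

lemma Ev_prod (i : ℕ) : Ev y i = y * ∏ k ∈ Finset.range i, Fv y k := by
  simp [Ev, eP, Fv, Polynomial.eval_prod]

lemma Ev0 : Ev y 0 = y := by simp [Ev_prod]
lemma EvS (i : ℕ) : Ev y (i+1) = Ev y i * Fv y i := by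
  rw [Ev_prod, Ev_prod, Finset.prod_range_succ]; ring

lemma Bv0 : Bv y 0 = 1 := by simp [Bv, bP]
lemma BvS (i : ℕ) : Bv y (i+1) = (-1)^(i+1) + Fv y i * Bv y i := by simp [Bv, bP, Fv]

lemma Zv0 : Zv y 0 = y - 1 := by simp [Zv, zP]
lemma Zv1 : Zv y 1 = y^2 - y + 1 := by simp [Zv, zP]
lemma Zv2 (i : ℕ) : Zv y (i+2) = Ev y (i+1) * Zv y (i+1) + Zv y i := by
  simp [Zv, zP, Ev]

lemma Dv_def (i : ℕ) : Dv y i = Ev y i + Bv y i * (Fv y i - 1) := by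
  simp [Dv, dP, Ev, Bv, Fv]

lemma Av0 (r : ℕ) : Av y r 0 = Dv y (r-1) - (Zv y (r-1) + y) * Bv y (r-1) := by
  simp [Av, aAux, Dv, Zv, Bv]

lemma AvS (r i : ℕ) : Av y r (i+1) = Dv y (r-1) - Fv y i * Av y r i := by
  simp [Av, aAux, Dv, Fv]

/-- identity (A): e (i+1) = f i + f (i+1) - 2 -/
lemma idA : ∀ i : ℕ, Ev y (i+1) = Fv y i + Fv y (i+1) - 2 := by
  intro i
  induction i with
  | zero => rw [EvS, Ev0, Fv0, Fv1]; ring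
  | succ i ih =>
      rw [EvS, Fv2, ih]
      rw [EvS] at ih
      ring

lemma FvAlt (i : ℕ) : Fv y (i+1) = Ev y i * Fv y i - Fv y i + 2 := by
  have h1 := idA y i
  have h2 := EvS y i
  linarith

/-- identity (C): y · b i · (f i − 1) = (−1)^i y + e i z i -/
lemma idC : ∀ i : ℕ, y * Bv y i * (Fv y i - 1) = (-1)^i * y + Ev y i * Zv y i := by
  have key : ∀ i : ℕ,
      (y * Bv y i * (Fv y i - 1) = (-1)^i * y + Ev y i * Zv y i) ∧
      (y * Bv y (i+1) * (Fv y (i+1) - 1) = (-1)^(i+1) * y + Ev y (i+1) * Zv y (i+1)) := by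
    intro i
    induction i with
    | zero =>
        constructor
        · rw [Bv0, Fv0, Ev0, Zv0]; ring
        · rw [BvS, Bv0, Fv0, Fv1, EvS, Ev0, Fv0, Zv1]; ring
    | succ i ih =>
        obtain ⟨hC0, hC1⟩ := ih
        refine ⟨hC1, ?_⟩
        have hB1 := BvS y i
        have hFi2 := FvAlt y i
        -- rewrite the goal
        rw [BvS y (i+1), Zv2 y i, Fv2 y i, EvS y (i+1), EvS y i]
        rw [EvS y i] at hC1
        rw [hB1] at hC1 ⊢
        rw [hFi2] at hC1 ⊢
        have hp1 : ((-1:ℤ))^(i+1) = -((-1:ℤ))^i := by rw [pow_succ]; ring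
        have hp2 : ((-1:ℤ))^(i+2) = ((-1:ℤ))^i := by rw [pow_succ, pow_succ]; ring
        rw [hp1] at hC1 ⊢
        rw [hp2]
        rcases Nat.even_or_odd i with he | ho
        · rw [he.neg_one_pow] at hC0 hC1 ⊢
          linear_combination (Ev y i * Fv y i * (Ev y i * Fv y i - Fv y i + 2)) * hC1 +
            (Fv y i * (Ev y i * Fv y i - Fv y i + 2)) * hC0
        · rw [ho.neg_one_pow] at hC0 hC1 ⊢
          linear_combination (Ev y i * Fv y i * (Ev y i * Fv y i - Fv y i + 2)) * hC1 +
            (Fv y i * (Ev y i * Fv y i - Fv y i + 2)) * hC0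
  exact fun i => (key i).1

/-- closed form for the weights -/
lemma idCF (w : ℕ) : ∀ i : ℕ, y * Av y (w+2) i =
    (-1)^i * (Bv y i * (y * Dv y (w+1)) - Ev y i * (Zv y (w+1) + y) * Bv y (w+1)) := by
  intro i
  induction i with
  | zero =>
      have h0 : Av y (w+2) 0 = Dv y (w+1) - (Zv y (w+1) + y) * Bv y (w+1) := by
        simpa using Av0 y (w+2)
      rw [h0, Bv0, Ev0]; ring
  | succ i ih =>
      have hS : Av y (w+2) (i+1) = Dv y (w+1) - Fv y i * Av y (w+2) i := by
        simpa using AvS y (w+2) i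
      rw [hS, BvS y i, EvS y i]
      have hp1 : ((-1:ℤ))^(i+1) = -((-1:ℤ))^i := by rw [pow_succ]; ring
      rw [hp1]
      rcases Nat.even_or_odd i with he | ho
      · rw [he.neg_one_pow] at ih ⊢
        linear_combination (-(Fv y i)) * ih
      · rw [ho.neg_one_pow] at ih ⊢
        linear_combination (-(Fv y i)) * ih

lemma hyD (w : ℕ) (hwo : Odd w) :
    y * Dv y (w+1) = y * Ev y (w+1) + y + Ev y (w+1) * Zv y (w+1) := by
  have hC := idC y (w+1)
  have hev : Even (w+1) := hwo.add_one
  rw [hev.neg_one_pow] at hC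
  rw [Dv_def]
  linarith [hC]

lemma hBr (w : ℕ) (hwo : Odd w) : Bv y (w+1) = 1 + Fv y w * Bv y w := by
  have := BvS y w
  rwa [(hwo.add_one).neg_one_pow] at this

lemma idI4 (w : ℕ) (hwo : Odd w) :
    y * Av y (w+2) w = Ev y w * (Zv y (w+1) + y) - y * Bv y w := by
  have hCF := idCF y w w
  rw [hwo.neg_one_pow] at hCF
  rw [hCF, hyD y w hwo, hBr y w hwo, EvS y w]
  ring

lemma idI5 (w : ℕ) (hwo : Odd w) (hy0 : y ≠ 0) :
    Dv y (w+1) - Fv y w * Av y (w+2) w = Bv y (w+1) := by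
  apply mul_left_cancel₀ hy0
  have h4 := idI4 y w hwo
  have hD := hyD y w hwo
  have hB := hBr y w hwo
  have hE := EvS y w
  linear_combination (-(Fv y w)) * h4 + hD + (-y) * hB + (Zv y (w+1) + y) * hE

lemma pow_two_split (y : ℤ) (n : ℕ) : y^(2^(n+1)) = y^(2^n) * y^(2^n) := by
  rw [← pow_add]; congr 1; rw [pow_succ]; omega

lemma pow_pred_split (y : ℤ) (n : ℕ) : y^(2^(n+1) - 1) = y^(2^n) * y^(2^n - 1) := by
  rw [← pow_add]; congr 1; rw [pow_succ]
  have : (1:ℕ) ≤ 2^n := Nat.one_le_two_pow; omega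

lemma pow_pred_mul (y : ℤ) (n : ℕ) : y^(2^n - 1) * y = y^(2^n) := by
  rw [← pow_succ]; congr 1
  have : (1:ℕ) ≤ 2^n := Nat.one_le_two_pow; omega

section Bounds
variable {y : ℤ} (hy : 2 ≤ y)

include hy

lemma pow_one_le (k : ℕ) : (1:ℤ) ≤ y^k := one_le_pow₀ (by linarith)

lemma pow_self_le (k : ℕ) (hk : 1 ≤ k) : y ≤ y^k := by
  calc y = y^1 := (pow_one y).symm
  _ ≤ y^k := pow_le_pow_right₀ (by linarith) hk

lemma pow_pos' (k : ℕ) : (0:ℤ) < y^k := pow_pos (by linarith) k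

lemma Fv_lb : ∀ i, y^(2^i) + 1 ≤ Fv y i := by
  have key : ∀ i, (y^(2^i) + 1 ≤ Fv y i) ∧ (y^(2^(i+1)) + 1 ≤ Fv y (i+1)) := by
    intro i
    induction i with
    | zero =>
        constructor
        · rw [Fv0]; norm_num
        · rw [Fv1]; norm_num
    | succ i ih =>
        obtain ⟨ih0, ih1⟩ := ih
        refine ⟨ih1, ?_⟩
        rw [Fv2]
        have hu : 2 ≤ y^(2^i) := le_trans hy (pow_self_le hy _ Nat.one_le_two_pow)
        have hv : y^(2^(i+1)) = y^(2^i) * y^(2^i) := pow_two_split y i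
        have hw : y^(2^(i+2)) = y^(2^(i+1)) * y^(2^(i+1)) := pow_two_split y (i+1)
        have hu1 : (0:ℤ) < y^(2^i) := pow_pos' hy _
        have hv1 : (0:ℤ) < y^(2^(i+1)) := pow_pos' hy _
        have h1 : (y^(2^(i+1)) + 1) * (y^(2^i) + 1) ≤ Fv y (i+1) * Fv y i :=
          mul_le_mul ih1 ih0 (by linarith) (by linarith)
        have h2 : (y^(2^(i+1))) * (y^(2^(i+1)) - 1) ≤ (Fv y (i+1) - 1) * (Fv y (i+1) - 2) :=
          mul_le_mul (by linarith) (by linarith) (by nlinarith) (by linarith)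
        nlinarith
  exact fun i => (key i).1

lemma Fv_ge3 (i : ℕ) : 3 ≤ Fv y i := by
  have := Fv_lb hy i
  have := pow_self_le hy (2^i) Nat.one_le_two_pow
  linarith

lemma Fv_pos (i : ℕ) : 0 < Fv y i := by linarith [Fv_ge3 hy i]

lemma Ev_lb : ∀ i, y^(2^i) ≤ Ev y i := by
  intro i
  induction i with
  | zero => rw [Ev0, pow_zero, pow_one]
  | succ i ih =>
      rw [EvS, pow_two_split y i]
      exact mul_le_mul ih (by linarith [Fv_lb hy i, pow_pos' hy (2^i)])
        (by positivity) (by linarith [pow_pos' hy (2^i)])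

lemma Ev_pos (i : ℕ) : 0 < Ev y i := lt_of_lt_of_le (pow_pos' hy _) (Ev_lb hy i)

lemma Bv_lb : ∀ i, y^(2^i - 1) ≤ Bv y i := by
  intro i
  induction i with
  | zero => simp [Bv0]
  | succ i ih =>
      rw [BvS]
      have hsgn : (-1:ℤ) ≤ (-1:ℤ)^(i+1) := by
        rcases Nat.even_or_odd (i+1) with he | ho
        · rw [he.neg_one_pow]; norm_num
        · rw [ho.neg_one_pow]
      have h1 : (y^(2^i) + 1) * y^(2^i - 1) ≤ Fv y i * Bv y i :=
        mul_le_mul (Fv_lb hy i) ih (by positivity) (by linarith [Fv_ge3 hy i])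
      have h2 : (1:ℤ) ≤ y^(2^i - 1) := pow_one_le hy _
      rw [pow_pred_split y i]
      nlinarith

lemma Bv_pos (i : ℕ) : 1 ≤ Bv y i := le_trans (pow_one_le hy _) (Bv_lb hy i)

lemma Bv_lb2 (i : ℕ) (h2i : 2 ≤ i) : y^(2^i - 1) + 1 ≤ Bv y i := by
  obtain ⟨j, rfl⟩ : ∃ j, i = j+1 := ⟨i-1, by omega⟩
  have hj : 1 ≤ j := by omega
  rw [BvS]
  have hsgn : (-1:ℤ) ≤ (-1:ℤ)^(j+1) := by
    rcases Nat.even_or_odd (j+1) with he | ho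
    · rw [he.neg_one_pow]; norm_num
    · rw [ho.neg_one_pow]
  have h1 : (y^(2^j) + 1) * y^(2^j - 1) ≤ Fv y j * Bv y j :=
    mul_le_mul (Fv_lb hy j) (Bv_lb hy j) (by positivity) (by linarith [Fv_ge3 hy j])
  have hj2 : (2:ℕ) ≤ 2^j := by
    calc (2:ℕ) = 2^1 := by norm_num
    _ ≤ 2^j := Nat.pow_le_pow_right (by norm_num) hj
  have h2 : y ≤ y^(2^j - 1) := pow_self_le hy _ (by omega)
  rw [pow_pred_split y j]
  nlinarith

lemma Bv_ub : ∀ i, y * Bv y i ≤ 2 * Ev y i - y := by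
  intro i
  induction i with
  | zero => rw [Bv0, Ev0]; linarith
  | succ i ih =>
      rw [BvS, EvS]
      have hsgn : y * (-1:ℤ)^(i+1) ≤ y := by
        rcases Nat.even_or_odd (i+1) with he | ho
        · rw [he.neg_one_pow]; linarith
        · rw [ho.neg_one_pow]; linarith
      have h1 : Fv y i * (y * Bv y i) ≤ Fv y i * (2 * Ev y i - y) :=
        mul_le_mul_of_nonneg_left ih (by linarith [Fv_ge3 hy i])
      have h3 := Fv_ge3 hy i
      have h4 := Ev_pos hy i
      nlinarith

lemma Zv_pos : ∀ i, 1 ≤ Zv y i := by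
  have key : ∀ i, (1 ≤ Zv y i) ∧ (1 ≤ Zv y (i+1)) := by
    intro i
    induction i with
    | zero =>
        constructor
        · rw [Zv0]; linarith
        · rw [Zv1]; nlinarith
    | succ i ih =>
        obtain ⟨ih0, ih1⟩ := ih
        refine ⟨ih1, ?_⟩
        rw [Zv2]
        nlinarith [Ev_pos hy (i+1)]
  exact fun i => (key i).1

lemma Zv_lb : ∀ i, y^(2^(i+2)) ≤ Zv y (i+2) := by
  intro i
  induction i with
  | zero =>
      rw [Zv2, EvS, Ev0, Fv0, Zv1, Zv0]
      have h : y^(2^2) = y*y*y*y := by ring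
      rw [h]; nlinarith
  | succ i ih =>
      rw [Zv2]
      have hv : y^(2^(i+3)) = y^(2^(i+2)) * y^(2^(i+2)) := pow_two_split y (i+2)
      rw [hv]
      have h1 : y^(2^(i+2)) * y^(2^(i+2)) ≤ Ev y (i+2) * Zv y (i+2) :=
        mul_le_mul (Ev_lb hy _) ih (by positivity) (by linarith [Ev_pos hy (i+2)])
      linarith [Zv_pos hy (i+1)]

lemma Ev_lb2 (i : ℕ) (h2i : 2 ≤ i) : y^(2^i) + y ≤ Ev y i := by
  induction i, h2i using Nat.le_induction with
  | base =>
      rw [EvS, EvS, Ev0, Fv0, Fv1]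
      have h : y^(2^2) = y*y*y*y := by ring
      rw [h]; nlinarith
  | succ i hi ih =>
      rw [EvS, pow_two_split y i]
      have h1 : (y^(2^i) + y) * (y^(2^i) + 1) ≤ Ev y i * Fv y i :=
        mul_le_mul ih (Fv_lb hy i) (by positivity) (by linarith [Ev_pos hy i])
      nlinarith [pow_pos' hy (2^i)]

lemma Fv_lb2 (i : ℕ) (h2i : 2 ≤ i) : (y+1) * y^(2^i - 1) ≤ Fv y i := by
  induction i, h2i using Nat.le_induction with
  | base =>
      rw [Fv2, Fv1, Fv0]
      have h3 : (2:ℕ)^2 - 1 = 3 := by norm_num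
      rw [h3]
      have h : y^3 = y*y*y := by ring
      rw [h]; nlinarith
  | succ i hi ih =>
      rw [FvAlt]
      have hE := Ev_lb2 hy i hi
      have hEq : y^(2^i - 1) * (y^(2^i) + y - 1) = y^(2^(i+1) - 1) + y^(2^i) - y^(2^i - 1) := by
        rw [pow_pred_split y i, ← pow_pred_mul y i]; ring
      have h1 : ((y+1) * y^(2^i - 1)) * (y^(2^i) + y - 1) ≤ Fv y i * (Ev y i - 1) :=
        mul_le_mul ih (by linarith) (by nlinarith [pow_one_le hy (2^i)]) (by linarith [Fv_pos hy i])
      have h2 : y^(2^i - 1) ≤ y^(2^i) := by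
        rw [← pow_pred_mul y i]
        nlinarith [pow_one_le hy (2^i - 1), pow_pos' hy (2^i - 1)]
      nlinarith [h1, hEq, mul_nonneg (show (0:ℤ) ≤ y+1 by linarith) (sub_nonneg.mpr h2)]

lemma prodIco_lb (a b : ℕ) (h : a ≤ b) :
    y^(2^b - 2^a) ≤ ∏ k ∈ Finset.Ico a b, Fv y k := by
  induction b, h using Nat.le_induction with
  | base => simp
  | succ b hb ih =>
      rw [Finset.prod_Ico_succ_top hb]
      have h2 : (2:ℕ)^a ≤ 2^b := Nat.pow_le_pow_right (by norm_num) hb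
      have hexp : y^(2^(b+1) - 2^a) = y^(2^b - 2^a) * y^(2^b) := by
        rw [← pow_add]; congr 1; rw [pow_succ]; omega
      rw [hexp]
      exact mul_le_mul ih (by linarith [Fv_lb hy b, pow_pos' hy (2^b)]) (by positivity)
        (le_trans (by positivity) ih)

lemma prod_pos (s : Finset ℕ) : 0 < ∏ k ∈ s, Fv y k :=
  Finset.prod_pos (fun k _ => Fv_pos hy k)

lemma BE : ∀ c : ℕ, (Ev y (2*c) + 1 ≤ (y+1) * Bv y (2*c)) ∧ (Ev y (2*c+1) ≤ (y+1) * Bv y (2*c+1)) := by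
  intro c
  induction c with
  | zero =>
      constructor
      · show Ev y 0 + 1 ≤ (y+1) * Bv y 0
        rw [Ev0, Bv0]; linarith
      · show Ev y (0+1) ≤ (y+1) * Bv y (0+1)
        rw [EvS, Ev0, Fv0, BvS, Bv0, Fv0]; ring_nf; nlinarith
  | succ c ih =>
      obtain ⟨ih0, ih1⟩ := ih
      have hBe : Bv y ((2*c+1)+1) = 1 + Fv y (2*c+1) * Bv y (2*c+1) := by
        rw [BvS]
        have hev : Even ((2*c+1)+1) := ⟨c+1, by ring⟩
        rw [hev.neg_one_pow]
      have hBo : Bv y (((2*c+1)+1)+1) = -1 + Fv y ((2*c+1)+1) * Bv y ((2*c+1)+1) := by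
        rw [BvS]
        have hod : Odd (((2*c+1)+1)+1) := ⟨c+1, by ring⟩
        rw [hod.neg_one_pow]
      constructor
      · show Ev y ((2*c+1)+1) + 1 ≤ (y+1) * Bv y ((2*c+1)+1)
        rw [hBe, EvS]
        have h1 : Fv y (2*c+1) * Ev y (2*c+1) ≤ Fv y (2*c+1) * ((y+1) * Bv y (2*c+1)) :=
          mul_le_mul_of_nonneg_left ih1 (by linarith [Fv_pos hy (2*c+1)])
        nlinarith
      · show Ev y (((2*c+1)+1)+1) ≤ (y+1) * Bv y (((2*c+1)+1)+1)
        rw [hBo, EvS]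
        have hF := Fv_lb hy ((2*c+1)+1)
        have hFy : y + 1 ≤ Fv y ((2*c+1)+1) := by
          have := pow_self_le hy (2^((2*c+1)+1)) Nat.one_le_two_pow
          linarith
        have hprev : Ev y ((2*c+1)+1) + 1 ≤ (y+1) * Bv y ((2*c+1)+1) := by
          rw [hBe, EvS]
          have h1 : Fv y (2*c+1) * Ev y (2*c+1) ≤ Fv y (2*c+1) * ((y+1) * Bv y (2*c+1)) :=
            mul_le_mul_of_nonneg_left ih1 (by linarith [Fv_pos hy (2*c+1)])
          nlinarith
        have h1 : Fv y ((2*c+1)+1) * (Ev y ((2*c+1)+1) + 1) ≤ Fv y ((2*c+1)+1) * ((y+1) * Bv y ((2*c+1)+1)) :=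
          mul_le_mul_of_nonneg_left hprev (by linarith [Fv_pos hy ((2*c+1)+1)])
        nlinarith

end Bounds

section Key
variable {y : ℤ} (hy : 2 ≤ y)
include hy

lemma keyK (w i : ℕ) (hwo : Odd w) (hi : i + 2 ≤ w + 1) :
    Fv y i * Fv y (i+1) * (y^(2^(w+2) - 2^i - 1) + 1) ≤ (Fv y (i+1) - 1) * Dv y (w+1) := by
  -- facts about exponents
  have hp1 : (1:ℕ) ≤ 2^i := Nat.one_le_two_pow
  have h2p : (2:ℕ)^(i+1) = 2 * 2^i := by rw [pow_succ]; ring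
  have h4p : (2:ℕ)^(i+2) = 4 * 2^i := by rw [pow_succ, pow_succ]; ring
  have h2q : (2:ℕ)^(w+2) = 2 * 2^(w+1) := by rw [pow_succ]; ring
  have hi2 : (2:ℕ)^(i+2) ≤ 2^(w+1) := Nat.pow_le_pow_right (by norm_num) hi
  -- D lower bound
  obtain ⟨c, hc⟩ : ∃ c, w + 1 = 2*c := by obtain ⟨t, ht⟩ := hwo; exact ⟨t+1, by omega⟩
  have hBE : Ev y (w+1) + 1 ≤ (y+1) * Bv y (w+1) := by
    have h := (BE hy c).1; rwa [← hc] at h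
  have hFw1pos := Fv_pos hy (w+1)
  have hFw1ge3 := Fv_ge3 hy (w+1)
  have hEw1pos := Ev_pos hy (w+1)
  have hD : Ev y (w+1) * (Fv y (w+1) + y) ≤ (y+1) * Dv y (w+1) := by
    rw [Dv_def]
    nlinarith [mul_le_mul_of_nonneg_right hBE (show (0:ℤ) ≤ Fv y (w+1) - 1 by linarith)]
  -- product split
  have hsplit : Ev y (w+1) = y * ((∏ k ∈ Finset.range i, Fv y k) *
      (Fv y i * Fv y (i+1)) * (∏ k ∈ Finset.Ico (i+2) (w+1), Fv y k)) := by
    rw [Ev_prod]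
    congr 1
    rw [← Finset.prod_range_mul_prod_Ico (Fv y) hi, Finset.prod_range_succ, Finset.prod_range_succ]
    ring
  set P := ∏ k ∈ Finset.range i, Fv y k with hPdef
  set Q := ∏ k ∈ Finset.Ico (i+2) (w+1), Fv y k with hQdef
  have hPpos : 0 < P := prod_pos hy _
  have hQpos : 0 < Q := prod_pos hy _
  have hPlb : y^(2^i - 1) ≤ P := by
    have h := prodIco_lb hy 0 i (Nat.zero_le i)
    rw [← Finset.range_eq_Ico] at h
    simpa using h
  have hQlb : y^(2^(w+1) - 2^(i+2)) ≤ Q := prodIco_lb hy _ _ hi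
  have hF1lb : y^(2^(i+1)) ≤ Fv y (i+1) - 1 := by linarith [Fv_lb hy (i+1)]
  have hFwlb : (y+1) * y^(2^(w+1) - 1) ≤ Fv y (w+1) := Fv_lb2 hy (w+1) (by omega)
  -- monotone chain
  have m1 : y^(2^i - 1) * y^(2^(w+1) - 2^(i+2)) ≤ P * Q :=
    mul_le_mul hPlb hQlb (by positivity) (by linarith)
  have m2 : y * (y^(2^i - 1) * y^(2^(w+1) - 2^(i+2))) ≤ y * (P * Q) :=
    mul_le_mul_of_nonneg_left m1 (by linarith)
  have hy0 : (0:ℤ) < y := by linarith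
  have e1eq : y * (y^(2^i - 1) * y^(2^(w+1) - 2^(i+2))) = y^(2^(w+1) - 3*2^i - 1 + 1) := by
    have h : y^(2^i - 1) * y^(2^(w+1) - 2^(i+2)) = y^(2^(w+1) - 3*2^i - 1) := by
      rw [← pow_add]; congr 1; omega
    rw [h, pow_succ]; ring
  have m2' : y^(2^(w+1) - 3*2^i - 1 + 1) ≤ y * (P * Q) := by rw [← e1eq]; exact m2
  have m3 : y^(2^(i+1)) * y^(2^(w+1) - 3*2^i - 1 + 1) ≤ (Fv y (i+1) - 1) * (y * (P * Q)) :=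
    mul_le_mul hF1lb m2' (le_of_lt (pow_pos' hy _)) (by linarith [Fv_ge3 hy (i+1)])
  have e2eq : y^(2^(i+1)) * y^(2^(w+1) - 3*2^i - 1 + 1) = y^(2^(w+1) - 2^i) := by
    rw [← pow_add]; congr 1; omega
  have m4 : (y+1) * y^(2^(w+1) - 1) + y ≤ Fv y (w+1) + y := by linarith
  have m3' : y^(2^(w+1) - 2^i) ≤ (Fv y (i+1) - 1) * (y * (P * Q)) := by
    rw [← e2eq]; exact m3
  have m5 : y^(2^(w+1) - 2^i) * ((y+1) * y^(2^(w+1) - 1) + y) ≤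
      ((Fv y (i+1) - 1) * (y * (P * Q))) * (Fv y (w+1) + y) := by
    have hb1 : (0:ℤ) < (y+1) * y^(2^(w+1) - 1) + y :=
      add_pos (mul_pos (by linarith) (pow_pos' hy _)) hy0
    have hb2 : (0:ℤ) ≤ (Fv y (i+1) - 1) * (y * (P * Q)) := by
      apply le_of_lt
      exact mul_pos (by linarith [Fv_ge3 hy (i+1)])
        (mul_pos hy0 (mul_pos hPpos hQpos))
    exact mul_le_mul m3' m4 (le_of_lt hb1) hb2
  -- evaluate the lower bound
  have eNeq : y^(2^(w+1) - 2^i) * y^(2^(w+1) - 1) = y^(2^(w+2) - 2^i - 1) := by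
    rw [← pow_add]; congr 1; omega
  have eE2 : y^(2^(w+1) - 2^i) * y = y^(2^(w+1) - 2^i + 1) := by
    rw [← pow_succ]
  have m6 : y + 1 ≤ y^(2^(w+1) - 2^i + 1) := by
    have h1 : y^2 ≤ y^(2^(w+1) - 2^i + 1) := pow_le_pow_right₀ (by linarith) (by omega)
    nlinarith
  have m7 : (y+1) * (y^(2^(w+2) - 2^i - 1) + 1) ≤
      y^(2^(w+1) - 2^i) * ((y+1) * y^(2^(w+1) - 1) + y) := by
    have hexpand : y^(2^(w+1) - 2^i) * ((y+1) * y^(2^(w+1) - 1) + y)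
        = (y+1) * y^(2^(w+2) - 2^i - 1) + y^(2^(w+1) - 2^i + 1) := by
      rw [← eNeq, ← eE2]; ring
    rw [hexpand]; linarith
  -- assemble
  have hApos : (0:ℤ) ≤ Fv y i * Fv y (i+1) :=
    le_of_lt (mul_pos (Fv_pos hy i) (Fv_pos hy (i+1)))
  have main : (y+1) * (Fv y i * Fv y (i+1) * (y^(2^(w+2) - 2^i - 1) + 1)) ≤
      (y+1) * ((Fv y (i+1) - 1) * Dv y (w+1)) := by
    have s1 : (Fv y (i+1) - 1) * (Ev y (w+1) * (Fv y (w+1) + y)) ≤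
        (Fv y (i+1) - 1) * ((y+1) * Dv y (w+1)) :=
      mul_le_mul_of_nonneg_left hD (by linarith [Fv_ge3 hy (i+1)])
    have s2 : (Fv y (i+1) - 1) * (Ev y (w+1) * (Fv y (w+1) + y)) =
        (Fv y i * Fv y (i+1)) * (((Fv y (i+1) - 1) * (y * (P * Q))) * (Fv y (w+1) + y)) := by
      rw [hsplit]; ring
    have s3 : (Fv y i * Fv y (i+1)) * (y^(2^(w+1) - 2^i) * ((y+1) * y^(2^(w+1) - 1) + y)) ≤
        (Fv y i * Fv y (i+1)) * (((Fv y (i+1) - 1) * (y * (P * Q))) * (Fv y (w+1) + y)) :=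
      mul_le_mul_of_nonneg_left m5 hApos
    have s4 : (Fv y i * Fv y (i+1)) * ((y+1) * (y^(2^(w+2) - 2^i - 1) + 1)) ≤
        (Fv y i * Fv y (i+1)) * (y^(2^(w+1) - 2^i) * ((y+1) * y^(2^(w+1) - 1) + y)) :=
      mul_le_mul_of_nonneg_left m7 hApos
    calc (y+1) * (Fv y i * Fv y (i+1) * (y^(2^(w+2) - 2^i - 1) + 1))
        = (Fv y i * Fv y (i+1)) * ((y+1) * (y^(2^(w+2) - 2^i - 1) + 1)) := by ring
      _ ≤ (Fv y i * Fv y (i+1)) * (y^(2^(w+1) - 2^i) * ((y+1) * y^(2^(w+1) - 1) + y)) := s4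
      _ ≤ (Fv y i * Fv y (i+1)) * (((Fv y (i+1) - 1) * (y * (P * Q))) * (Fv y (w+1) + y)) := s3
      _ = (Fv y (i+1) - 1) * (Ev y (w+1) * (Fv y (w+1) + y)) := s2.symm
      _ ≤ (Fv y (i+1) - 1) * ((y+1) * Dv y (w+1)) := s1
      _ = (y+1) * ((Fv y (i+1) - 1) * Dv y (w+1)) := by ring
  exact le_of_mul_le_mul_left main (by linarith)

end Key

section Main
variable {y : ℤ} (hy : 2 ≤ y)
include hy

lemma baseV (w : ℕ) (hwo : Odd w) :
    y^(2^(w+2) - 2^w - 1) + 1 ≤ Av y (w+2) w ∧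
    Fv y w * Av y (w+2) w + 1 ≤ Dv y (w+1) := by
  have hy0 : (0:ℤ) < y := by linarith
  constructor
  · have h4 := idI4 y w hwo
    have hZ : y^(2^(w+1)) ≤ Zv y (w+1) := by
      obtain ⟨v, rfl⟩ : ∃ v, w = v+1 := ⟨w-1, by obtain ⟨t,ht⟩ := hwo; omega⟩
      exact Zv_lb hy v
    have m1 : y^(2^w) * y^(2^(w+1)) ≤ Ev y w * Zv y (w+1) :=
      mul_le_mul (Ev_lb hy w) hZ (le_of_lt (pow_pos' hy _)) (le_of_lt (Ev_pos hy w))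
    have hexp : y^(2^w) * y^(2^(w+1)) = y^((2^(w+2) - 2^w - 1) + 1) := by
      rw [← pow_add]; congr 1
      have e1 : (2:ℕ)^(w+1) = 2*2^w := by rw [pow_succ]; ring
      have e2 : (2:ℕ)^(w+2) = 2*2^(w+1) := by rw [pow_succ]; ring
      have : (1:ℕ) ≤ 2^w := Nat.one_le_two_pow
      omega
    have hBub := Bv_ub hy w
    have hmargin : (0:ℤ) ≤ (y - 2) * Ev y w :=
      mul_nonneg (by linarith) (le_of_lt (Ev_pos hy w))
    have key : y * (y^(2^(w+2) - 2^w - 1) + 1) ≤ y * Av y (w+2) w := by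
      rw [h4]
      have hNp : y^((2^(w+2) - 2^w - 1) + 1) = y^(2^(w+2) - 2^w - 1) * y := pow_succ y _
      nlinarith [m1, hexp, hBub, hmargin]
    exact le_of_mul_le_mul_left key hy0
  · have h5 := idI5 y w hwo (by linarith)
    have := Bv_pos hy (w+1)
    linarith

lemma hVall (w : ℕ) (hwo : Odd w) :
    ∀ k j, j + k = w →
      (y^(2^(w+2) - 2^j - 1) + 1 ≤ Av y (w+2) j ∧
       Fv y j * Av y (w+2) j + 1 ≤ Dv y (w+1)) := by
  intro k
  induction k with
  | zero =>
      intro j hj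
      have hjw : j = w := by omega
      subst hjw
      exact baseV hy j hwo
  | succ k ih =>
      intro j hj
      obtain ⟨l1, u1⟩ := ih (j+1) (by omega)
      have hrec : Av y (w+2) (j+1) = Dv y (w+1) - Fv y j * Av y (w+2) j := by
        simpa using AvS y (w+2) j
      have hKj := keyK hy w j hwo (by omega)
      have hA1pos : (1:ℤ) ≤ Av y (w+2) (j+1) :=
        le_trans (by nlinarith [pow_pos' hy (2^(w+2) - 2^(j+1) - 1)]) l1
      constructor
      · have hposA : (0:ℤ) < Fv y j * Fv y (j+1) := mul_pos (Fv_pos hy j) (Fv_pos hy (j+1))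
        have hmul : Fv y j * Fv y (j+1) * Av y (w+2) j =
            Fv y (j+1) * Dv y (w+1) - Fv y (j+1) * Av y (w+2) (j+1) := by
          linear_combination (Fv y (j+1)) * hrec
        have hmono : Fv y j * Fv y (j+1) * (y^(2^(w+2) - 2^j - 1) + 1) ≤
            Fv y j * Fv y (j+1) * Av y (w+2) j := by
          rw [hmul]
          linarith [hKj, u1]
        exact le_of_mul_le_mul_left hmono hposA
      · linarith [hrec, hA1pos]

end Main

end VolEst

open VolEst

/-- Lower bounds on the weights and the resulting volume bound.
Let `r` be odd, `r ≥ 3`, `n ≥ r − 1`, and `y ≥ 2` an integer. With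
`a i = (aP r i).eval y` for `0 ≤ i ≤ r-1` and `x = 1 + a 0 + ⋯ + a (r-1)`:
`b (r-1) (y) ≥ y^(2^(r-1) − 1)`, `a i > y^(2^r − 2^i − 1)` for `0 ≤ i ≤ r-1`,
`x > y^(2^r − 2)`, and consequently, as rational numbers,
`1/(y^(n−r) · x^(n−r+1) · a 0 ⋯ a (r-1)) < 1/y^((2^r − 1)·n − 1)`. -/
theorem volume_estimate (r n : ℕ) (hodd : Odd r) (hr : 3 ≤ r) (hn : r - 1 ≤ n)
    (y : ℤ) (hy : 2 ≤ y)
    (a : ℕ → ℤ) (ha : ∀ i, a i = (aP r i).eval y)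
    (x : ℤ) (hx : x = 1 + ∑ j ∈ Finset.range r, a j) :
    y ^ (2 ^ (r - 1) - 1) ≤ (bP (r - 1)).eval y ∧
    (∀ i ≤ r - 1, y ^ (2 ^ r - 2 ^ i - 1) < a i) ∧
    y ^ (2 ^ r - 2) < x ∧
    (1 : ℚ) / ((y : ℚ) ^ ((n : ℤ) - r) * (x : ℚ) ^ ((n : ℤ) - r + 1) *
        ∏ i ∈ Finset.range r, (a i : ℚ))
      < 1 / (y : ℚ) ^ ((2 ^ r - 1) * n - 1) := by
  obtain ⟨w, rfl⟩ : ∃ w, r = w + 2 := ⟨r - 2, by omega⟩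
  have hwo : Odd w := by obtain ⟨t, ht⟩ := hodd; exact ⟨t - 1, by omega⟩
  have hw1 : 1 ≤ w := by obtain ⟨t, ht⟩ := hwo; omega
  have hy0 : (0:ℤ) < y := by linarith
  have M2 : (2:ℕ) ≤ 2^(w+2) := by
    calc (2:ℕ) = 2^1 := rfl
    _ ≤ 2^(w+2) := Nat.pow_le_pow_right (by norm_num) (by omega)
  have haAux : ∀ i, i ≤ w → a i = Av y (w+2) i := by
    intro i hi
    rw [ha i]
    have hdef : aP (w+2) i = if i = (w+2)-1 then bP ((w+2)-1) else aAux (w+2) i := rfl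
    rw [hdef, if_neg (show ¬ (i = (w+2)-1) by omega)]
    rfl
  have haTop : a (w+1) = Bv y (w+1) := by
    rw [ha]
    have hdef : aP (w+2) (w+1) = if (w+1) = (w+2)-1 then bP ((w+2)-1) else aAux (w+2) (w+1) := rfl
    rw [hdef, if_pos (show (w+1) = (w+2)-1 by omega)]
    rfl
  have hall : ∀ i, i ≤ w + 1 → y^(2^(w+2) - 2^i - 1) < a i := by
    intro i hi
    rcases Nat.lt_or_ge i (w+1) with hlt | hge
    · have hle : i ≤ w := by omega
      obtain ⟨l, _⟩ := hVall hy w hwo (w - i) i (by omega)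
      rw [haAux i hle]; linarith
    · have hiw : i = w+1 := by omega
      subst hiw
      rw [haTop]
      have hB := Bv_lb2 hy (w+1) (by omega)
      have he : 2^(w+2) - 2^(w+1) - 1 = 2^(w+1) - 1 := by
        have h1 : (2:ℕ)^(w+2) = 2*2^(w+1) := by rw [pow_succ]; ring
        have h2 : (1:ℕ) ≤ 2^(w+1) := Nat.one_le_two_pow
        omega
      rw [he]; linarith
  have hapos : ∀ i, i ≤ w+1 → 0 < a i :=
    fun i hi => lt_trans (pow_pos' hy _) (hall i hi)
  have hx3 : y^(2^(w+2) - 2) < x := by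
    have h0 : y^(2^(w+2) - 2) < a 0 := by
      have h := hall 0 (by omega)
      have he : 2^(w+2) - 2^0 - 1 = 2^(w+2) - 2 := by
        have h0 : (2:ℕ)^0 = 1 := rfl
        omega
      rwa [he] at h
    have hsum : a 0 ≤ ∑ j ∈ Finset.range (w+2), a j :=
      Finset.single_le_sum (f := a)
        (fun j hj => le_of_lt (hapos j (by have := Finset.mem_range.mp hj; omega)))
        (by simp)
    linarith [hx.symm.le]
  refine ⟨Bv_lb hy (w+1), fun i hi => hall i (by omega), hx3, ?_⟩
  -- claim 4
  set k : ℕ := n + 1 - (w + 2) with hk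
  have hkn : n = k + w + 1 := by omega
  have hgeo : ∀ s : ℕ, ∑ i ∈ Finset.range s, 2^(i+1) = 2^(s+1) - 2 := by
    intro s; induction s with
    | zero => simp
    | succ s ih =>
        rw [Finset.sum_range_succ, ih]
        have h1 : (2:ℕ)^(s+2) = 2*2^(s+1) := by rw [pow_succ]; ring
        have h2 : (2:ℕ) ≤ 2^(s+1) := by
          calc (2:ℕ) = 2^1 := rfl
          _ ≤ 2^(s+1) := Nat.pow_le_pow_right (by norm_num) (by omega)
        omega
  have hprodPow : ∏ i ∈ Finset.range (w+1), (y^(2^(i+1)+1)) = y^(2^(w+2) - 2 + (w+1)) := by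
    rw [Finset.prod_pow_eq_pow_sum]
    congr 1
    rw [Finset.sum_add_distrib, hgeo (w+1)]
    simp
  have hper : ∀ i ∈ Finset.range (w+1), y^(2^(w+2)) ≤ a (i+1) * y^(2^(i+1)+1) := by
    intro i hi
    simp only [Finset.mem_range] at hi
    have hlow := hall (i+1) (by omega)
    have hE : y^(2^(w+2)) = y^(2^(w+2) - 2^(i+1) - 1) * y^(2^(i+1)+1) := by
      rw [← pow_add]; congr 1
      have h1 : (2:ℕ)^(i+1) ≤ 2^(w+1) := Nat.pow_le_pow_right (by norm_num) (by omega)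
      have h2 : (2:ℕ)^(w+2) = 2*2^(w+1) := by rw [pow_succ]; ring
      have h3 : (1:ℕ) ≤ 2^(i+1) := Nat.one_le_two_pow
      omega
    rw [hE]
    exact mul_le_mul_of_nonneg_right (le_of_lt hlow) (le_of_lt (pow_pos' hy _))
  have hAprodpos : 0 < ∏ i ∈ Finset.range (w+1), a (i+1) :=
    Finset.prod_pos (fun i hi => hapos (i+1) (by have := Finset.mem_range.mp hi; omega))
  have hprod1 : y^((w+1) * 2^(w+2)) ≤
      (∏ i ∈ Finset.range (w+1), a (i+1)) * y^(2^(w+2) - 2 + (w+1)) := by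
    rw [← hprodPow, ← Finset.prod_mul_distrib]
    calc y^((w+1) * 2^(w+2)) = (y^(2^(w+2)))^(w+1) := by rw [← pow_mul]; congr 1; ring
      _ = ∏ _i ∈ Finset.range (w+1), y^(2^(w+2)) := by
          rw [Finset.prod_const, Finset.card_range]
      _ ≤ ∏ i ∈ Finset.range (w+1), (a (i+1) * y^(2^(i+1)+1)) :=
          Finset.prod_le_prod (fun i _ => le_of_lt (pow_pos' hy _)) hper
  have ha0 : y^(2^(w+2) - 2) + 1 ≤ a 0 := by
    have h := hall 0 (by omega)
    have he : 2^(w+2) - 2^0 - 1 = 2^(w+2) - 2 := by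
      have h0 : (2:ℕ)^0 = 1 := rfl
      omega
    rw [he] at h
    exact Int.add_one_le_iff.mpr h
  set E0 : ℕ := 2^(w+2) - 2 + (w+1) + 2 with hE0
  have hbig : y^((w+2) * 2^(w+2)) + 1 ≤ (∏ i ∈ Finset.range (w+2), a i) * y^E0 := by
    have hsplit4 : ∏ i ∈ Finset.range (w+2), a i = (∏ i ∈ Finset.range (w+1), a (i+1)) * a 0 :=
      Finset.prod_range_succ' a (w+1)
    have e1 : y^(2^(w+2) - 2) * y^2 = y^(2^(w+2)) := by
      rw [← pow_add]; congr 1; omega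
    have ha0y : y^(2^(w+2)) + 1 ≤ a 0 * y^2 := by
      have h := mul_le_mul_of_nonneg_right ha0 (le_of_lt (pow_pos' hy 2))
      have hy2 : (1:ℤ) ≤ y^2 := pow_one_le hy 2
      nlinarith [e1]
    have hcomb : (y^((w+1) * 2^(w+2))) * (y^(2^(w+2)) + 1) ≤
        ((∏ i ∈ Finset.range (w+1), a (i+1)) * y^(2^(w+2) - 2 + (w+1))) * (a 0 * y^2) :=
      mul_le_mul hprod1 ha0y (by positivity) (le_of_lt (mul_pos hAprodpos (pow_pos' hy _)))
    have e2 : (y^((w+1) * 2^(w+2))) * (y^(2^(w+2)) + 1) =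
        y^((w+2) * 2^(w+2)) + y^((w+1) * 2^(w+2)) := by
      rw [mul_add, ← pow_add, mul_one]; congr 2; ring
    have e3 : ((∏ i ∈ Finset.range (w+1), a (i+1)) * y^(2^(w+2) - 2 + (w+1))) * (a 0 * y^2) =
        (∏ i ∈ Finset.range (w+2), a i) * y^E0 := by
      rw [hsplit4, hE0]
      rw [show (2^(w+2) - 2 + (w+1) + 2) = (2^(w+2) - 2 + (w+1)) + 2 from rfl, pow_add]
      ring
    rw [← e3]
    have hge1 : (1:ℤ) ≤ y^((w+1) * 2^(w+2)) := pow_one_le hy _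
    linarith [hcomb, e2.symm.le, e2.le]
  have hxpow : y^((2^(w+2) - 2) * k) ≤ x^k := by
    calc y^((2^(w+2) - 2) * k) = (y^(2^(w+2) - 2))^k := by rw [← pow_mul]
    _ ≤ x^k := pow_le_pow_left₀ (le_of_lt (pow_pos' hy _)) (le_of_lt hx3) k
  have hnk : (n:ℤ) = (k:ℤ) + (w:ℤ) + 1 := by exact_mod_cast hkn
  have hfin : (2^(w+2) - 1) * n + E0 = k + ((2^(w+2) - 2) * k + (w+2) * 2^(w+2)) := by
    have h1 : (1:ℕ) ≤ 2^(w+2) := by omega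
    rw [hE0]
    zify [h1, M2]
    linear_combination ((2:ℤ)^(w+2) - 1) * hnk
  have HZ : y^((2^(w+2) - 1) * n) < y^k * x^k * ∏ i ∈ Finset.range (w+2), a i := by
    have hstep : y^((2^(w+2) - 1) * n) * y^E0 <
        (y^k * x^k * ∏ i ∈ Finset.range (w+2), a i) * y^E0 := by
      calc y^((2^(w+2)-1)*n) * y^E0
          = y^k * (y^((2^(w+2)-2)*k) * y^((w+2)*2^(w+2))) := by
            rw [← pow_add, hfin, pow_add, pow_add]
        _ < y^k * (y^((2^(w+2)-2)*k) * (y^((w+2)*2^(w+2)) + 1)) := by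
            have hlt : y^((w+2)*2^(w+2)) < y^((w+2)*2^(w+2)) + 1 := by linarith
            exact mul_lt_mul_of_pos_left (mul_lt_mul_of_pos_left hlt (pow_pos' hy _)) (pow_pos' hy _)
        _ ≤ y^k * (x^k * ((∏ i ∈ Finset.range (w+2), a i) * y^E0)) := by
            apply mul_le_mul_of_nonneg_left _ (le_of_lt (pow_pos' hy k))
            apply mul_le_mul hxpow hbig (by positivity) (le_of_lt (pow_pos (lt_trans (pow_pos' hy _) hx3) k))
        _ = (y^k * x^k * ∏ i ∈ Finset.range (w+2), a i) * y^E0 := by ring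
    exact lt_of_mul_lt_mul_right hstep (le_of_lt (pow_pos' hy E0))
  -- pass to ℚ
  have hyQ : (0:ℚ) < (y:ℚ) := by exact_mod_cast hy0
  have hxZ : (0:ℤ) < x := lt_trans (pow_pos' hy _) hx3
  have hxQ : (0:ℚ) < (x:ℚ) := by exact_mod_cast hxZ
  have haQ : (0:ℚ) < ∏ i ∈ Finset.range (w+2), (a i : ℚ) := by
    apply Finset.prod_pos
    intro i hi
    have : 0 < a i := hapos i (by have := Finset.mem_range.mp hi; omega)
    exact_mod_cast this
  have e1 : (n:ℤ) - ((w+2:ℕ):ℤ) + 1 = ((k:ℕ):ℤ) := by push_cast; omega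
  have e2 : (n:ℤ) - ((w+2:ℕ):ℤ) = ((k:ℕ):ℤ) - 1 := by push_cast; omega
  rw [e1, e2, zpow_natCast, zpow_sub_one₀ (ne_of_gt hyQ), zpow_natCast]
  apply one_div_lt_one_div_of_lt (pow_pos hyQ _)
  have target : (y:ℚ)^((2^(w+2)-1)*n) < (y:ℚ)^k * (x:ℚ)^k * ∏ i ∈ Finset.range (w+2), (a i:ℚ) := by
    exact_mod_cast HZ
  have hMy : (y:ℚ)^((2^(w+2)-1)*n - 1) * (y:ℚ) = (y:ℚ)^((2^(w+2)-1)*n) := by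
    rw [← pow_succ]; congr 1
    have h1 : 1 ≤ (2^(w+2)-1)*n := by
      have hn1 : 1 ≤ n := by omega
      have h2 : 1 ≤ 2^(w+2)-1 := by omega
      exact le_trans (by norm_num) (Nat.mul_le_mul h2 hn1)
    omega
  have hshape : (y:ℚ)^k * (y:ℚ)⁻¹ * (x:ℚ)^k * (∏ i ∈ Finset.range (w+2), (a i:ℚ)) =
      ((y:ℚ)^k * (x:ℚ)^k * ∏ i ∈ Finset.range (w+2), (a i:ℚ)) / (y:ℚ) := by
    rw [div_eq_mul_inv]; ring
  rw [hshape, lt_div_iff₀ hyQ, hMy]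
  exact target
end

section
/- For every integer y, the integers a_2 = y^3 + y + 1, a_1 = y(y+1)(1 + a_2) − a_2, and a_0 = y(1 + a_2 + a_1) − a_1 are pairwise relatively prime: gcd(a_0, a_1) = gcd(a_0, a_2) = gcd(a_1, a_2) = 1. -/
/-- For every integer `y`, the integers `a₂ = y³+y+1`, `a₁ = y(y+1)(1+a₂) − a₂`, and
`a₀ = y(1+a₂+a₁) − a₁` are pairwise relatively prime. -/
theorem klt_r3_weights_coprime (y a₂ a₁ a₀ : ℤ)
    (h2 : a₂ = y ^ 3 + y + 1)
    (h1 : a₁ = y * (y + 1) * (1 + a₂) - a₂)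
    (h0 : a₀ = y * (1 + a₂ + a₁) - a₁) :
    Int.gcd a₀ a₁ = 1 ∧ Int.gcd a₀ a₂ = 1 ∧ Int.gcd a₁ a₂ = 1 := by
  subst h2 h1 h0
  refine ⟨?_, ?_, ?_⟩ <;> rw [← Int.isCoprime_iff_gcd_eq_one]
  · exact ⟨y ^ 4 + y ^ 3 + 2 * y, -y ^ 5 - 2 * y ^ 2 + y - 1, by ring⟩
  · exact ⟨-y ^ 2 + y - 2, y ^ 5 - y ^ 4 + y ^ 3 + 3 * y ^ 2 - 4 * y + 3, by ring⟩
  · exact ⟨-2 * y ^ 2 + y - 3, 2 * y ^ 4 + y ^ 3 + 6 * y - 2, by ring⟩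
end

section
/- Let r ≥ 2 be an integer. In ℤ[y], define a_{r−1} = b_{r−1}, a_0 = d_{r−1} − (z_{r−1} + y)·a_{r−1}, and a_{i+1} = d_{r−1} − f_i·a_i for 0 ≤ i ≤ r − 3. Then the identity a_{r−1} = d_{r−1} − f_{r−2}·a_{r−2} holds in ℤ[y]. -/
open Polynomial

/-- Partial products of `fP`. -/
noncomputable def FPaux (n : ℕ) : Polynomial ℤ := ∏ k ∈ Finset.range n, fP k

lemma FPaux_succ (n : ℕ) : FPaux (n + 1) = FPaux n * fP n :=
  Finset.prod_range_succ _ _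

lemma eP_FPaux (n : ℕ) : eP n = X * FPaux n := rfl

/-- `e (n+1) = f (n+1) + f n − 2`. -/
lemma eP_succ_eq (n : ℕ) : eP (n + 1) = fP (n + 1) + fP n - 2 := by
  induction n with
  | zero =>
      rw [eP, Finset.prod_range_one]
      show X * (X + 1) = (X ^ 2 + 1) + (X + 1) - 2
      ring
  | succ n ih =>
      have h : eP (n + 2) = eP (n + 1) * fP (n + 1) := by
        simp only [eP_FPaux, FPaux_succ]; ring
      rw [h, ih, show fP (n + 2)
        = fP (n + 1) * fP n + (fP (n + 1) - 1) * (fP (n + 1) - 2) from rfl]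
      ring

/-- Key identity: `(f n − 1)·b n = (−1)^n + (f 0 ⋯ f (n−1))·z n`. -/
lemma keyL : ∀ n : ℕ, (fP n - 1) * bP n = (-1) ^ n + FPaux n * zP n := by
  intro n
  induction n using Nat.twoStepInduction with
  | zero =>
      simp only [fP, bP, zP, FPaux, Finset.range_zero, Finset.prod_empty]
      ring
  | one =>
      simp only [fP, bP, zP, FPaux, Finset.prod_range_one]
      ring
  | more n ih1 ih2 =>
      have hb1 : bP (n + 1) = (-1) ^ (n + 1) + fP n * bP n := rfl
      have hz2 : zP (n + 2) = eP (n + 1) * zP (n + 1) + zP n := rfl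
      have hf2 : fP (n + 2)
          = fP (n + 1) * fP n + (fP (n + 1) - 1) * (fP (n + 1) - 2) := rfl
      have hb2 : bP (n + 2) = (-1) ^ (n + 2) + fP (n + 1) * bP (n + 1) := rfl
      rw [hz2, hf2, hb2, eP_succ_eq, FPaux_succ, FPaux_succ] at *
      linear_combination (fP (n + 1) * (fP (n + 1) + fP n - 2)) * ih2
        + (fP n * fP (n + 1)) * ih1 + (fP (n + 1) * (fP n - 1)) * hb1

/-- Closed form for `aAux`. -/
lemma aAux_eq (r : ℕ) : ∀ i : ℕ, aAux r i
    = (-1) ^ i * (bP i * dP (r - 1)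
        - FPaux i * (zP (r - 1) + X) * bP (r - 1)) := by
  intro i
  induction i with
  | zero =>
      simp only [aAux, bP, FPaux, Finset.range_zero, Finset.prod_empty]
      ring
  | succ i ih =>
      have hs : ((-1 : Polynomial ℤ) ^ i) * ((-1) ^ i) = 1 := by
        rw [← pow_add]
        exact Even.neg_one_pow ⟨i, rfl⟩
      have hb1 : bP (i + 1) = (-1) ^ (i + 1) + fP i * bP i := rfl
      rw [show aAux r (i + 1) = dP (r - 1) - fP i * aAux r i from rfl, ih,
        hb1, FPaux_succ]
      linear_combination (-(dP (r - 1))) * hs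

/-- For `r ≥ 2`, the identity `a (r-1) = d (r-1) − f (r-2) · a (r-2)` holds in `ℤ[y]`. -/
theorem aP_last_identity (r : ℕ) (hr : 2 ≤ r) :
    aP r (r - 1) = dP (r - 1) - fP (r - 2) * aP r (r - 2) := by
  obtain ⟨n, rfl⟩ : ∃ n, r = n + 2 := ⟨r - 2, by omega⟩
  have h1 : aP (n + 2) (n + 1) = bP (n + 1) := if_pos rfl
  have h2 : aP (n + 2) n = aAux (n + 2) n := if_neg (by omega)
  show aP (n + 2) (n + 1) = dP (n + 1) - fP n * aP (n + 2) n
  rw [h1, h2, show aAux (n + 2) n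
      = (-1) ^ n * (bP n * dP (n + 1)
          - FPaux n * (zP (n + 1) + X) * bP (n + 1)) from aAux_eq (n + 2) n]
  have hd : dP (n + 1)
      = X * (FPaux n * fP n) + bP (n + 1) * (fP (n + 1) - 1) := by
    rw [dP, eP_FPaux, FPaux_succ]
  have hb1 : bP (n + 1) = (-1) ^ (n + 1) + fP n * bP n := rfl
  have hkey : (fP (n + 1) - 1) * bP (n + 1)
      = (-1) ^ (n + 1) + FPaux n * fP n * zP (n + 1) := by
    rw [← FPaux_succ]; exact keyL (n + 1)
  have hs : ((-1 : Polynomial ℤ) ^ n) * ((-1) ^ n) = 1 := by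
    rw [← pow_add]
    exact Even.neg_one_pow ⟨n, rfl⟩
  rw [hd]
  linear_combination (bP (n + 1) * (-1) ^ n) * hkey
    + (2 - 2 * ((-1 : Polynomial ℤ) ^ n * (-1) ^ n) + bP (n + 1) * (-1) ^ n
        - fP (n + 1) + fP (n + 1) * ((-1 : Polynomial ℤ) ^ n * (-1) ^ n)
        - fP (n + 1) * bP (n + 1) * (-1) ^ n
        - fP n * (-1) ^ n * FPaux n * X) * hb1
    + (2 * (-1 : Polynomial ℤ) ^ n - fP (n + 1) * (-1) ^ n
        + fP n * FPaux n * X - 2 * fP n * bP n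
        + fP n * fP (n + 1) * bP n) * hs
end

section
/- For every integer y and every natural number i, the following congruences hold for the integers f_i(y) and b_i(y): f_i(y) ≡ 1 (mod y); b_i(y) ≡ 1 (mod y) if i is even and b_i(y) ≡ 0 (mod y) if i is odd; f_i(y) ≡ 0 (mod y+1) if i is even and f_i(y) ≡ 2 (mod y+1) if i is odd; b_0(y) ≡ 1 (mod y+1), and b_i(y) ≡ −1 (mod y+1) for every i ≥ 1. -/
open Polynomial

/-- Congruences mod `y` and mod `y+1` for the evaluations `f i (y)` and `b i (y)`:
`f i (y) ≡ 1 (mod y)`; `b i (y) ≡ 1 (mod y)` if `i` is even and `≡ 0 (mod y)` if `i` is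
odd; `f i (y) ≡ 0 (mod y+1)` if `i` is even and `≡ 2 (mod y+1)` if `i` is odd;
`b 0 (y) ≡ 1 (mod y+1)` and `b i (y) ≡ −1 (mod y+1)` for `i ≥ 1`. -/
theorem fP_bP_congruences (y : ℤ) (i : ℕ) :
    ((fP i).eval y ≡ 1 [ZMOD y]) ∧
    (Even i → (bP i).eval y ≡ 1 [ZMOD y]) ∧
    (Odd i → (bP i).eval y ≡ 0 [ZMOD y]) ∧
    (Even i → (fP i).eval y ≡ 0 [ZMOD (y + 1)]) ∧
    (Odd i → (fP i).eval y ≡ 2 [ZMOD (y + 1)]) ∧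
    ((bP 0).eval y ≡ 1 [ZMOD (y + 1)]) ∧
    (1 ≤ i → (bP i).eval y ≡ -1 [ZMOD (y + 1)]) := by
  have hy : y ≡ 0 [ZMOD y] := Int.modEq_zero_iff_dvd.mpr dvd_rfl
  have hy1 : y ≡ -1 [ZMOD (y+1)] := Int.modEq_iff_dvd.mpr ⟨-1, by ring⟩
  have hb0 : (bP 0).eval y = 1 := by simp [bP]
  induction i using Nat.strong_induction_on with
  | _ i ih =>
    match i with
    | 0 =>
      refine ⟨?_, ?_, ?_, ?_, ?_, ?_, ?_⟩
      · simp only [fP, eval_add, eval_X, eval_one]; exact hy.add_right 1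
      · intro _; simp [bP]
      · intro h; exact absurd h (by decide)
      · intro _; simp only [fP, eval_add, eval_X, eval_one]; exact hy1.add_right 1
      · intro h; exact absurd h (by decide)
      · simp [bP]
      · omega
    | 1 =>
      have hf1 : (fP 1).eval y = y^2 + 1 := by simp [fP]
      have hb1 : (bP 1).eval y = y := by simp [fP, bP]
      refine ⟨?_, ?_, ?_, ?_, ?_, ?_, ?_⟩
      · rw [hf1]; calc y^2+1 ≡ 0^2+1 [ZMOD y] := (hy.pow 2).add_right 1
          _ = 1 := by norm_num
      · intro h; exact absurd h (by decide)
      · intro _; rw [hb1]; exact hy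
      · intro h; exact absurd h (by decide)
      · intro _; rw [hf1]
        calc y^2+1 ≡ (-1)^2+1 [ZMOD (y+1)] := (hy1.pow 2).add_right 1
          _ = 2 := by norm_num
      · simp [bP]
      · intro _; rw [hb1]; exact hy1
    | (n + 2) =>
      obtain ⟨hf0, hbe0, hbo0, hg0, hh0, _, hbm0⟩ := ih n (by omega)
      obtain ⟨hf1, hbe1, hbo1, hg1, hh1, _, hbm1⟩ := ih (n+1) (by omega)
      have hfeval : (fP (n+2)).eval y =
          (fP (n+1)).eval y * (fP n).eval y +
          ((fP (n+1)).eval y - 1) * ((fP (n+1)).eval y - 2) := by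
        simp [fP]
      have hbeval : (bP (n+2)).eval y = (-1)^(n+2) + (fP (n+1)).eval y * (bP (n+1)).eval y := by
        simp [bP]
      have hbm : (bP (n+1)).eval y ≡ -1 [ZMOD (y+1)] := hbm1 (by omega)
      refine ⟨?_, ?_, ?_, ?_, ?_, ?_, ?_⟩
      · rw [hfeval]
        calc _ ≡ 1 * 1 + (1-1)*(1-2) [ZMOD y] :=
              (hf1.mul hf0).add ((hf1.sub_right 1).mul (hf1.sub_right 2))
          _ = 1 := by norm_num
      · intro h
        have hn1 : Odd (n+1) := by simp [Nat.even_iff, Nat.odd_iff] at h ⊢; omega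
        have : ((-1:ℤ))^(n+2) = 1 := (by simpa using h : Even (n+2)).neg_one_pow
        rw [hbeval, this]
        calc _ ≡ 1 + 1 * 0 [ZMOD y] := (hf1.mul (hbo1 hn1)).add_left 1
          _ = 1 := by norm_num
      · intro h
        have hn1 : Even (n+1) := by simp [Nat.even_iff, Nat.odd_iff] at h ⊢; omega
        have : ((-1:ℤ))^(n+2) = -1 := (by simpa using h : Odd (n+2)).neg_one_pow
        rw [hbeval, this]
        calc _ ≡ -1 + 1 * 1 [ZMOD y] := (hf1.mul (hbe1 hn1)).add_left _
          _ = 0 := by norm_num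
      · intro h
        have hn : Even n := by simp [Nat.even_iff] at h ⊢; omega
        have hn1 : Odd (n+1) := Even.add_one hn
        rw [hfeval]
        calc _ ≡ 2 * 0 + (2-1)*(2-2) [ZMOD (y+1)] :=
              ((hh1 hn1).mul (hg0 hn)).add (((hh1 hn1).sub_right 1).mul ((hh1 hn1).sub_right 2))
          _ = 0 := by norm_num
      · intro h
        have hn : Odd n := by simp [Nat.odd_iff] at h ⊢; omega
        have hn1 : Even (n+1) := Odd.add_one hn
        rw [hfeval]
        calc _ ≡ 0 * 2 + (0-1)*(0-2) [ZMOD (y+1)] :=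
              ((hg1 hn1).mul (hh0 hn)).add (((hg1 hn1).sub_right 1).mul ((hg1 hn1).sub_right 2))
          _ = 2 := by norm_num
      · simp [bP]
      · intro _
        rcases Nat.even_or_odd (n+1) with he | ho
        · have : ((-1:ℤ))^(n+2) = -1 := by
            have : Odd (n+2) := by simp [Nat.even_iff, Nat.odd_iff] at he ⊢; omega
            exact this.neg_one_pow
          rw [hbeval, this]
          calc _ ≡ -1 + 0 * -1 [ZMOD (y+1)] := ((hg1 he).mul hbm).add_left _
            _ = -1 := by norm_num
        · have : ((-1:ℤ))^(n+2) = 1 := by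
            have : Even (n+2) := by simp [Nat.even_iff, Nat.odd_iff] at ho ⊢; omega
            exact this.neg_one_pow
          rw [hbeval, this]
          calc _ ≡ 1 + 2 * -1 [ZMOD (y+1)] := ((hh1 ho).mul hbm).add_left _
            _ = -1 := by norm_num
end
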